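/- arXiv:1508.04050 — 2 statements merged into one kernel-verified Lean document; each statement's English description precedes it below -/
import Mathlib

section
/- Let n ∈ ℕ, m : Fin n → ℕ, p : (i : Fin n) → Fin (m i) → ℕ, and f ∈ Σ_n. Set P_i = ∑_j p_i(j) and let p♭ : Fin (∑ i, m i) → ℕ denote the flattened family of the p_i(j). Then δ_{∑ m; p♭}(δ_{n;m}(f)) = δ_{n;P}(f), both sides regarded as permutations of the same finite set via the canonical identification of the sum of the flattened family with ∑_i P_i. -/
/-- Splitting a sigma type over `Fin (n+1)` as first block plus the rest. -/
def sigmaFinSuccEquiv (n : ℕ) (β : Fin (n + 1) → Type*) :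
    ((i : Fin (n + 1)) × β i) ≃ β 0 ⊕ ((i : Fin n) × β i.succ) where
  toFun x := Fin.cases (motive := fun i => β i → β 0 ⊕ ((i : Fin n) × β i.succ))
    (fun b => Sum.inl b) (fun i b => Sum.inr ⟨i, b⟩) x.1 x.2
  invFun x := Sum.elim (fun b => ⟨0, b⟩) (fun p => ⟨p.1.succ, p.2⟩) x
  left_inv := by
    rintro ⟨i, b⟩
    induction i using Fin.cases <;> simp
  right_inv := by rintro (b | ⟨i, b⟩) <;> simp

/-- The canonical order-preserving equivalence `(Σ i : Fin n, Fin (k i)) ≃ Fin (∑ i, k i)`,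
putting the blocks in order. -/
def finSigmaFinEquiv' : ∀ {n : ℕ} {k : Fin n → ℕ}, ((i : Fin n) × Fin (k i)) ≃ Fin (∑ i, k i)
  | 0, k => (Equiv.equivOfIsEmpty _ (Fin 0)).trans (finCongr (Fin.sum_univ_zero k).symm)
  | n + 1, k =>
      ((sigmaFinSuccEquiv n fun i => Fin (k i)).trans
        ((Equiv.refl (Fin (k 0))).sumCongr (finSigmaFinEquiv' (k := fun i => k i.succ)))).trans
        (finSumFinEquiv.trans (finCongr (Fin.sum_univ_succ k).symm))

/-- The block sum `β_k(h₁, …, h_n)` of permutations `h i : Σ_{k i}`: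
on the sigma type it is `(i, j) ↦ (i, h i j)`. -/
def blockSum {n : ℕ} {k : Fin n → ℕ} (h : (i : Fin n) → Equiv.Perm (Fin (k i))) :
    Equiv.Perm (Fin (∑ i, k i)) :=
  finSigmaFinEquiv'.symm.trans ((Equiv.sigmaCongrRight h).trans finSigmaFinEquiv')

/-- The block permutation `δ_{n;k}(σ)`: on the sigma type it is `(i, j) ↦ (σ i, j)`,
regarded as a permutation of `Fin (∑ i, k i)` via `∑ i, k (σ⁻¹ i) = ∑ i, k i`. -/
def blockPerm {n : ℕ} (k : Fin n → ℕ) (σ : Equiv.Perm (Fin n)) :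
    Equiv.Perm (Fin (∑ i, k i)) :=
  finSigmaFinEquiv'.symm.trans
    ((Equiv.sigmaCongrLeft' (β := fun i => Fin (k i)) σ).trans
      (finSigmaFinEquiv'.trans (finCongr (Equiv.sum_comp σ.symm k))))

/-- Transport of permutations along an equality of cardinalities. -/
def permCast {a b : ℕ} (h : a = b) : Equiv.Perm (Fin a) ≃ Equiv.Perm (Fin b) :=
  (finCongr h).permCongr

/-- Flattening a doubly indexed family of sizes. -/
def flatten {n : ℕ} {k : Fin n → ℕ} (m : (i : Fin n) → Fin (k i) → ℕ) :
    Fin (∑ i, k i) → ℕ :=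
  fun y => m (finSigmaFinEquiv'.symm y).1 (finSigmaFinEquiv'.symm y).2

/-- The canonical identification of the double sum with the sum of the flattened family. -/
theorem sum_flatten {n : ℕ} {k : Fin n → ℕ} (m : (i : Fin n) → Fin (k i) → ℕ) :
    ∑ i, ∑ j, m i j = ∑ y, flatten m y := by
  rw [← Equiv.sum_comp (finSigmaFinEquiv' (k := k)) (flatten m),
    ← Finset.univ_sigma_univ, Finset.sum_sigma]
  exact Finset.sum_congr rfl fun a _ => Finset.sum_congr rfl fun s _ => by
    simp only [flatten]
    conv_rhs => rw [Equiv.symm_apply_apply]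

/-!
Everything is computed on positions in `ℕ`. The block `(i, j)` of the layout for `k` starts at
`∑ l with l < i, k l`, so under `δ_{n;k}(σ)` it starts at `∑ l with σ l < σ i, k l`. Since
`finSigmaFinEquiv'` is lexicographic, the blocks `(a, b)` that precede `(i, j)` after applying
`δ_{n;m}(f)` are those with `f a < f i` and those with `a = i`, `b < j`. Summing `p` over them
gives the offset of block `i` under `δ_{n;P}(f)` plus the offset of `j` inside block `i`, which is
where the right-hand side sends the same point.
-/

open Finset

section LexPosition

variable {α M : Type*} [Fintype α] [LinearOrder α]

theorem sum_filter_lt_add_le_sum_filter_lt [AddCommMonoid M] [PartialOrder M]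
    [CanonicallyOrderedAdd M] (k : α → M) {a a' : α} (h : a < a') :
    ∑ l with l < a, k l + k a ≤ ∑ l with l < a', k l := by
  rw [add_comm, ← sum_insert (by simp)]
  refine sum_le_sum_of_subset fun l => ?_
  simp only [mem_insert, mem_filter, mem_univ, true_and]
  rintro (rfl | hl)
  exacts [h, hl.trans h]

theorem sum_filter_lt_add_lt_iff (k : α → ℕ) {a a' : α} {b b' : ℕ} (hb : b < k a)
    (hb' : b' < k a') :
    ∑ l with l < a, k l + b < ∑ l with l < a', k l + b' ↔ a < a' ∨ a = a' ∧ b < b' := by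
  rcases lt_trichotomy a a' with h | rfl | h
  · have := sum_filter_lt_add_le_sum_filter_lt k h
    simp only [h, true_or, iff_true]
    omega
  · simp
  · have := sum_filter_lt_add_le_sum_filter_lt k h
    simp only [h.ne', h.not_gt, false_and, or_self, iff_false, not_lt]
    omega

theorem sum_filter_apply_lt_apply [AddCommMonoid M] (σ : Equiv.Perm α) (k : α → M) (i : α) :
    ∑ l with σ l < σ i, k l = ∑ l with l < σ i, k (σ.symm l) := by
  rw [sum_filter, sum_filter, ← Equiv.sum_comp σ fun l => if l < σ i then k (σ.symm l) else 0]
  simp only [Equiv.symm_apply_apply]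

end LexPosition

theorem finSigmaFinEquiv'_val : ∀ {n : ℕ} {k : Fin n → ℕ} (i : Fin n) (j : Fin (k i)),
    (finSigmaFinEquiv' ⟨i, j⟩ : ℕ) = ∑ l with l < i, k l + j
  | 0, _, i, _ => i.elim0
  | n + 1, k, i, j => by
    induction i using Fin.cases with
    | zero => simp [finSigmaFinEquiv', sigmaFinSuccEquiv]
    | succ i =>
      simp [finSigmaFinEquiv', sigmaFinSuccEquiv, finSigmaFinEquiv'_val (k := fun l => k l.succ),
        sum_filter, Fin.sum_univ_succ, Fin.succ_pos, add_assoc]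

theorem finSigmaFinEquiv'_lt_iff {n : ℕ} {k : Fin n → ℕ} {a a' : Fin n} (b : Fin (k a))
    (b' : Fin (k a')) :
    finSigmaFinEquiv' ⟨a, b⟩ < finSigmaFinEquiv' ⟨a', b'⟩ ↔ a < a' ∨ a = a' ∧ (b : ℕ) < b' := by
  rw [Fin.lt_def, finSigmaFinEquiv'_val, finSigmaFinEquiv'_val,
    sum_filter_lt_add_lt_iff k b.isLt b'.isLt]

theorem sum_filter_finSigmaFinEquiv' {M : Type*} [AddCommMonoid M] {n : ℕ} {k : Fin n → ℕ}
    (g : Fin (∑ i, k i) → M) (P : Fin (∑ i, k i) → Prop) [DecidablePred P]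
    (s : Finset (Fin n)) {i : Fin n} (hi : i ∉ s) (j : Fin (k i))
    (hP : ∀ a b, P (finSigmaFinEquiv' ⟨a, b⟩) ↔ a ∈ s ∨ a = i ∧ (b : ℕ) < j) :
    ∑ y with P y, g y =
      ∑ a ∈ s, ∑ b, g (finSigmaFinEquiv' ⟨a, b⟩) +
        ∑ b with b < j, g (finSigmaFinEquiv' ⟨i, b⟩) := by
  rw [sum_filter, ← Equiv.sum_comp finSigmaFinEquiv', Fintype.sum_sigma]
  simp_rw [hP]
  rw [← sum_add_sum_compl s]
  congr 1
  · exact sum_congr rfl fun a ha => by simp [ha]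
  · rw [sum_eq_single_of_mem i (mem_compl.2 hi)]
    · simp [hi, sum_filter]
    · intro a ha hai
      simp [mem_compl.1 ha, hai]

@[simp]
theorem flatten_finSigmaFinEquiv' {n : ℕ} {k : Fin n → ℕ} (p : (i : Fin n) → Fin (k i) → ℕ)
    (i : Fin n) (j : Fin (k i)) : flatten p (finSigmaFinEquiv' ⟨i, j⟩) = p i j := by
  rw [flatten, Equiv.symm_apply_apply]

theorem finCongr_sum_flatten_finSigmaFinEquiv' {n : ℕ} {k : Fin n → ℕ}
    (p : (i : Fin n) → Fin (k i) → ℕ) (i : Fin n) (j : Fin (k i))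
    (t : Fin (flatten p (finSigmaFinEquiv' ⟨i, j⟩))) :
    finCongr (sum_flatten p).symm (finSigmaFinEquiv' ⟨finSigmaFinEquiv' ⟨i, j⟩, t⟩) =
      finSigmaFinEquiv' ⟨i, finSigmaFinEquiv' ⟨j, t.cast (flatten_finSigmaFinEquiv' p i j)⟩⟩ := by
  ext
  rw [finCongr_apply, Fin.val_cast, finSigmaFinEquiv'_val, finSigmaFinEquiv'_val,
    finSigmaFinEquiv'_val, sum_filter_finSigmaFinEquiv' (flatten p) _ {a | a < i} (by simp) j
      fun a b => by rw [finSigmaFinEquiv'_lt_iff]; simp]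
  simp [add_assoc]

theorem sigmaCongrLeft'_fin_mk {n : ℕ} {k : Fin n → ℕ} (σ : Equiv.Perm (Fin n)) (i : Fin n)
    (j : Fin (k i)) :
    Equiv.sigmaCongrLeft' (β := fun i => Fin (k i)) σ ⟨i, j⟩ = ⟨σ i, Fin.cast (by simp) j⟩ := by
  rw [Equiv.sigmaCongrLeft', Equiv.symm_apply_eq, Equiv.sigmaCongrLeft_apply]
  ext
  · simp
  · simp [Fin.heq_ext_iff]

theorem blockPerm_finSigmaFinEquiv'_val {n : ℕ} (k : Fin n → ℕ) (σ : Equiv.Perm (Fin n))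
    (i : Fin n) (j : Fin (k i)) :
    (blockPerm k σ (finSigmaFinEquiv' ⟨i, j⟩) : ℕ) = ∑ l with σ l < σ i, k l + j := by
  rw [sum_filter_apply_lt_apply]
  simp [blockPerm, sigmaCongrLeft'_fin_mk, finSigmaFinEquiv'_val]

theorem blockPerm_lt_blockPerm_iff {n : ℕ} (k : Fin n → ℕ) (σ : Equiv.Perm (Fin n))
    {a a' : Fin n} (b : Fin (k a)) (b' : Fin (k a')) :
    blockPerm k σ (finSigmaFinEquiv' ⟨a, b⟩) < blockPerm k σ (finSigmaFinEquiv' ⟨a', b'⟩) ↔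
      σ a < σ a' ∨ a = a' ∧ (b : ℕ) < b' := by
  rw [Fin.lt_def, blockPerm_finSigmaFinEquiv'_val, blockPerm_finSigmaFinEquiv'_val,
    sum_filter_apply_lt_apply, sum_filter_apply_lt_apply,
    sum_filter_lt_add_lt_iff _ (by simp) (by simp), σ.injective.eq_iff]

theorem blockPerm_blockPerm {n : ℕ} (m : Fin n → ℕ)
    (p : (i : Fin n) → Fin (m i) → ℕ) (f : Equiv.Perm (Fin n)) :
    blockPerm (flatten p) (blockPerm m f) =
      permCast (sum_flatten p) (blockPerm (fun i => ∑ j, p i j) f) := by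
  ext x
  obtain ⟨⟨y, t⟩, rfl⟩ := finSigmaFinEquiv'.surjective x
  obtain ⟨⟨i, j⟩, rfl⟩ := finSigmaFinEquiv'.surjective y
  rw [permCast, Equiv.permCongr_apply, finCongr_symm, finCongr_sum_flatten_finSigmaFinEquiv',
    finCongr_apply, Fin.val_cast, blockPerm_finSigmaFinEquiv'_val,
    blockPerm_finSigmaFinEquiv'_val, finSigmaFinEquiv'_val,
    sum_filter_finSigmaFinEquiv' (flatten p) _ {a | f a < f i} (by simp) j
      fun a b => by rw [blockPerm_lt_blockPerm_iff]; simp]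
  simp [add_assoc]
end

section
/- Let (Λ, π, β, δ) be an action-operad datum and define μ(g; h_1, …, h_n) := δ_{n;k}(g)·β_k(h_1, …, h_n) ∈ Λ(∑k) for g ∈ Λ(n) and h_i ∈ Λ(k_i). Then μ satisfies the action operad equivariance axiom: for g, g' ∈ Λ(n), k : Fin n → ℕ, f_i' ∈ Λ(k_i), and f_i ∈ Λ(k_{π_n(g')⁻¹(i)}), one has μ(g; f_1, …, f_n) · μ(g'; f_1', …, f_n') = μ(g·g'; f_{π_n(g')(1)}·f_1', …, f_{π_n(g')(n)}·f_n') in Λ(∑k), where μ(g; f_1, …, f_n) ∈ Λ(∑ k∘π_n(g')⁻¹) is regarded in Λ(∑k) via ∑ k∘π_n(g')⁻¹ = ∑ k. -/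
/-- Transport along an equality of indices. -/
def acast {Λ : ℕ → Type*} {a b : ℕ} (h : a = b) (x : Λ a) : Λ b := h ▸ x

/-- An action-operad datum: a family of groups `Λ n` with maps to the symmetric groups,
block sum homomorphisms `β` and block functions `δ`, satisfying the nine axioms of
Theorem 1.9 (charAOp). -/
structure ActionOperadData (Λ : ℕ → Type*) [∀ n, Group (Λ n)] where
  π : ∀ n : ℕ, Λ n →* Equiv.Perm (Fin n)
  β : ∀ (n : ℕ) (k : Fin n → ℕ), ((i : Fin n) → Λ (k i)) →* Λ (∑ i, k i)
  δ : ∀ (n : ℕ) (k : Fin n → ℕ), Λ n → Λ (∑ i, k i)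
  /-- (1) `β` is compatible with the underlying permutations. -/
  ax1 : ∀ (n : ℕ) (k : Fin n → ℕ) (h : (i : Fin n) → Λ (k i)),
    π (∑ i, k i) (β n k h) = blockSum fun i => π (k i) (h i)
  /-- (2) for `n = 1`, `β : Λ(k) → Λ(k)` is the identity. -/
  ax2 : ∀ (k : Fin 1 → ℕ) (h : (i : Fin 1) → Λ (k i)),
    β 1 k h = acast (Fin.sum_univ_one k).symm (h 0)
  /-- (3) `β` applied to a family of `β`'s is `β` of the flattened family. -/
  ax3 : ∀ (n : ℕ) (k : Fin n → ℕ) (m : (i : Fin n) → Fin (k i) → ℕ)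
      (h : (i : Fin n) → (j : Fin (k i)) → Λ (m i j)),
    acast (sum_flatten m) (β n (fun i => ∑ j, m i j) (fun i => β (k i) (m i) (h i))) =
      β (∑ i, k i) (flatten m)
        (fun y => h (finSigmaFinEquiv'.symm y).1 (finSigmaFinEquiv'.symm y).2)
  /-- (4) `δ` is compatible with the underlying permutations. -/
  ax4 : ∀ (n : ℕ) (k : Fin n → ℕ) (g : Λ n),
    π (∑ i, k i) (δ n k g) = blockPerm k (π n g)
  /-- (5) `δ_{n;(1,…,1)}` and `δ_{1;(n)}` are the identity. -/
  ax5a : ∀ (n : ℕ) (g : Λ n), δ n (fun _ => 1) g = acast (by simp) g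
  ax5b : ∀ n : ℕ, δ 1 (fun _ => n) 1 = 1
  /-- (6) twisted multiplicativity of `δ`. -/
  ax6 : ∀ (n : ℕ) (k j : Fin n → ℕ) (g h : Λ n)
      (hmatch : ∀ i, k i = j ((π n h)⁻¹ i)),
    acast ((Finset.sum_congr rfl fun i _ => hmatch i).trans
        (Equiv.sum_comp (π n h)⁻¹ j)) (δ n k g) * δ n j h = δ n j (g * h)
  /-- (7) associativity of `δ`. -/
  ax7 : ∀ (n : ℕ) (m : Fin n → ℕ) (p : (i : Fin n) → Fin (m i) → ℕ) (f : Λ n),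
    δ (∑ i, m i) (flatten p) (δ n m f) = acast (sum_flatten p) (δ n (fun i => ∑ j, p i j) f)
  /-- (8) commutation of `δ` past `β`. -/
  ax8 : ∀ (n : ℕ) (k : Fin n → ℕ) (g : Λ n) (h : (i : Fin n) → Λ (k i)),
    δ n k g * β n k h =
      acast (Equiv.sum_comp (π n g)⁻¹ k)
          (β n (fun i => k ((π n g)⁻¹ i)) (fun i => h ((π n g)⁻¹ i))) * δ n k g
  /-- (9) interchange of `β` and `δ`. -/
  ax9 : ∀ (n : ℕ) (k : Fin n → ℕ) (m : (i : Fin n) → Fin (k i) → ℕ)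
      (g : (i : Fin n) → Λ (k i)),
    acast (sum_flatten m) (β n (fun i => ∑ j, m i j) (fun i => δ (k i) (m i) (g i))) =
      δ (∑ i, k i) (flatten m) (β n k g)

/-!
Write `σ = π(g')`. Axiom (8) moves `β(f)` to the right past `δ(g')`, turning it into
`β(f ∘ σ)`; axiom (6) then merges `δ(g)·δ(g')` into `δ(gg')`, and since `β` is a
homomorphism, `β(f ∘ σ)·β(f')` is `β((f ∘ σ)·f')`.
-/

theorem acast_mul {Λ : ℕ → Type*} [∀ n, Group (Λ n)] {a b : ℕ} (h : a = b) (x y : Λ a) :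
    acast h (x * y) = acast h x * acast h y := by
  subst h; rfl

theorem acast_apply_of_eq {α : Sort*} {Λ : ℕ → Type*} {K : α → ℕ} (F : ∀ a, Λ (K a)) {a b : α}
    (e : a = b) (e' : K a = K b) : acast e' (F a) = F b := by
  subst e; rfl

namespace ActionOperadData

variable {Λ : ℕ → Type*} [∀ n, Group (Λ n)] (D : ActionOperadData Λ)

theorem acast_delta_mul_delta (n : ℕ) (k : Fin n → ℕ) (g g' : Λ n) :
    acast (Equiv.sum_comp (D.π n g')⁻¹ k) (D.δ n (fun i => k ((D.π n g')⁻¹ i)) g) *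
      D.δ n k g' = D.δ n k (g * g') :=
  D.ax6 n _ k g g' fun _ => rfl

theorem acast_beta_mul_delta (n : ℕ) (k : Fin n → ℕ) (g' : Λ n)
    (f : (i : Fin n) → Λ (k ((D.π n g')⁻¹ i))) :
    acast (Equiv.sum_comp (D.π n g')⁻¹ k) (D.β n (fun i => k ((D.π n g')⁻¹ i)) f) *
        D.δ n k g' =
      D.δ n k g' * D.β n k fun i =>
        acast (congrArg k ((D.π n g').symm_apply_apply i)) (f (D.π n g' i)) := by
  rw [D.ax8]
  congr
  funext i
  exact (acast_apply_of_eq f ((D.π n g').apply_symm_apply i) _).symm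

end ActionOperadData

/-- The multiplication `μ(g; h₁, …, h_n) := δ_{n;k}(g)·β_k(h₁, …, h_n)` associated to an
action-operad datum satisfies the action operad equivariance axiom
`μ(g; f₁, …, f_n)·μ(g'; f₁', …, f_n') = μ(gg'; f_{π(g')(1)}f₁', …, f_{π(g')(n)}f_n')`. -/
theorem mu_equivariance {Λ : ℕ → Type*} [∀ n, Group (Λ n)] (D : ActionOperadData Λ)
    (n : ℕ) (k : Fin n → ℕ) (g g' : Λ n)
    (f : (i : Fin n) → Λ (k ((D.π n g')⁻¹ i))) (f' : (i : Fin n) → Λ (k i)) :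
    acast (Equiv.sum_comp (D.π n g')⁻¹ k)
        (D.δ n (fun i => k ((D.π n g')⁻¹ i)) g *
          D.β n (fun i => k ((D.π n g')⁻¹ i)) f) *
      (D.δ n k g' * D.β n k f') =
    D.δ n k (g * g') *
      D.β n k (fun i =>
        acast (congrArg k (show (D.π n g')⁻¹ (D.π n g' i) = i from (D.π n g').symm_apply_apply i)) (f (D.π n g' i)) * f' i) := by
  calc _ = acast (Equiv.sum_comp (D.π n g')⁻¹ k) (D.δ n (fun i => k ((D.π n g')⁻¹ i)) g) *
          (acast (Equiv.sum_comp (D.π n g')⁻¹ k) (D.β n (fun i => k ((D.π n g')⁻¹ i)) f) *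
            D.δ n k g') * D.β n k f' := by
        simp only [acast_mul, mul_assoc]
    _ = acast (Equiv.sum_comp (D.π n g')⁻¹ k) (D.δ n (fun i => k ((D.π n g')⁻¹ i)) g) *
          D.δ n k g' * (D.β n k (fun i => acast (congrArg k (by simp)) (f (D.π n g' i))) *
            D.β n k f') := by
        rw [D.acast_beta_mul_delta]
        simp only [mul_assoc]
    _ = _ := by
        rw [D.acast_delta_mul_delta, ← map_mul]
        rfl
end
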